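/- Let n ≥ 4 be a composite integer. The Laplacian spectral radius of Γ(Z_n) equals the number of vertices of Γ(Z_n) if and only if n is a product of two distinct primes, or n is a prime power with n ≠ 4. -/

import Mathlib

open scoped BigOperators

/-- Vertex set of the zero divisor graph of `ZMod n`: the nonzero zero divisors. -/
abbrev ZdVert (n : ℕ) : Type :=
  {x : ZMod n // x ≠ 0 ∧ ∃ y : ZMod n, y ≠ 0 ∧ x * y = 0}

/-- The zero divisor graph `Γ(ZMod n)`: vertices are the nonzero zero divisors, and two
distinct vertices are adjacent iff their product is zero. -/
def zdGraph (n : ℕ) : SimpleGraph (ZdVert n) where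
  Adj a b := a ≠ b ∧ (a : ZMod n) * (b : ZMod n) = 0
  symm := ⟨by
    rintro a b ⟨hne, h⟩
    exact ⟨hne.symm, by rwa [mul_comm]⟩⟩
  loopless := ⟨fun a h => h.1 rfl⟩

instance (n : ℕ) : DecidableRel (zdGraph n).Adj :=
  fun a b => inferInstanceAs (Decidable (a ≠ b ∧ (a : ZMod n) * (b : ZMod n) = 0))

instance (n : ℕ) (s : Set (ZdVert n)) [DecidablePred (· ∈ s)] :
    DecidableRel ((zdGraph n).induce s).Adj :=
  fun a b => inferInstanceAs (Decidable ((zdGraph n).Adj a b))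

/-- The set `A_d = {x ∈ ZMod n : gcd(x, n) = d}`, viewed inside the vertex set of the
zero divisor graph. -/
def fiberSet (n : ℕ) (d : ℕ) : Set (ZdVert n) :=
  {v | Nat.gcd (v : ZMod n).val n = d}

instance (n d : ℕ) : DecidablePred (· ∈ fiberSet n d) :=
  fun v => inferInstanceAs (Decidable (Nat.gcd (v : ZMod n).val n = d))

/-- The multiset of Laplacian eigenvalues (roots of the characteristic polynomial of the
Laplacian matrix, counted with multiplicity) of a finite graph. -/
noncomputable def lapEigs {V : Type*} [Fintype V] [DecidableEq V] (G : SimpleGraph V)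
    [DecidableRel G.Adj] : Multiset ℝ :=
  (G.lapMatrix ℝ).charpoly.roots

/-- The algebraic connectivity `μ(G)`: the second smallest Laplacian eigenvalue. -/
noncomputable def algConn {V : Type*} [Fintype V] [DecidableEq V] (G : SimpleGraph V)
    [DecidableRel G.Adj] : ℝ :=
  ((lapEigs G).sort (· ≤ ·)).getD 1 (Fintype.card V)

/-- The Laplacian spectral radius `λ(G)`: the largest Laplacian eigenvalue. -/
noncomputable def lapRadius {V : Type*} [Fintype V] [DecidableEq V] (G : SimpleGraph V)
    [DecidableRel G.Adj] : ℝ :=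
  ((lapEigs G).sort (· ≤ ·)).getD (Fintype.card V - 1) 0


/-!
Write `N` for the number of vertices and `L`, `Lᶜ` for the Laplacians of `G` and of its
complement. Since `L + Lᶜ = N • 1 - J`, an eigenvector `x` of `L` for `μ` satisfies
`x ⬝ Lᶜ x = (N - μ) ‖x‖² - (∑ x)² ≥ 0`. So every Laplacian eigenvalue is at most `N`, and `μ = N`
forces `∑ x = 0` and `Lᶜ x = 0`, i.e. `x` is a non-zero vector, constant on the components of `Gᶜ`,
with sum `0`: this exists exactly when `Gᶜ` is disconnected. Hence `λ(G) = N` iff `Gᶜ` is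
disconnected.

In the complement of `Γ(ℤ/n)`, `x` and `y` are adjacent iff `x y ≠ 0`. For `n = p q`, divisibility
by `p` propagates along its edges, so `p` and `q` lie in different components. For `n = p ^ k` with
`k ≥ 2`, `p ^ (k - 1)` kills every vertex and is isolated, while `p ≠ -p` are vertices unless
`n = 4`. For `n = 4` there is a single vertex. Otherwise there are primes `p ≠ q` with `p q` a
proper divisor of `n`, and every vertex is joined to `p`, or (if it kills `p`, hence not the
coprime `q`) to `q`, which is joined to `p`.
-/

open Finset Matrix Polynomial

theorem Matrix.mem_roots_charpoly_iff {K V : Type*} [Field K] [Fintype V] [DecidableEq V]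
    (A : Matrix V V K) (t : K) : t ∈ A.charpoly.roots ↔ ∃ x ≠ 0, A *ᵥ x = t • x := by
  rw [mem_roots A.charpoly_monic.ne_zero, IsRoot, eval_charpoly, ← exists_mulVec_eq_zero_iff]
  simp only [scalar_apply, ← smul_one_eq_diagonal, sub_mulVec, smul_mulVec, one_mulVec,
    sub_eq_zero, eq_comm]

theorem List.Pairwise.le_getD_length_sub_one {α : Type*} [LinearOrder α] {l : List α}
    (hl : l.Pairwise (· ≤ ·)) {a : α} (ha : a ∈ l) (d : α) : a ≤ l.getD (l.length - 1) d := by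
  have hne : l ≠ [] := List.ne_nil_of_mem ha
  rw [List.getD_eq_getElem _ _ (by simpa [List.length_pos_iff] using hne),
    ← List.getLast_eq_getElem hne]
  exact hl.rel_getLast ha

namespace SimpleGraph

variable {V : Type*} [Fintype V] [DecidableEq V] (G : SimpleGraph V) [DecidableRel G.Adj]

theorem lapMatrix_add_lapMatrix_compl (R : Type*) [Ring R] :
    G.lapMatrix R + Gᶜ.lapMatrix R = (Fintype.card V : R) • 1 - of fun _ _ ↦ 1 := by
  ext i j
  rcases eq_or_ne i j with rfl | hij
  · have hle : G.degree i ≤ Fintype.card V - 1 := Nat.le_sub_one_of_lt (G.degree_lt_card_verts i)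
    have hpos : 1 ≤ Fintype.card V := Fintype.card_pos_iff.mpr ⟨i⟩
    simp [lapMatrix, degMatrix, degree_compl, Nat.cast_sub hle, Nat.cast_sub hpos]
  · by_cases h : G.Adj i j <;> simp [lapMatrix, degMatrix, hij, h, adjMatrix_apply]

theorem card_lapEigs : Multiset.card (lapEigs G) = Fintype.card V := by
  simp [lapEigs, (G.isHermitian_lapMatrix ℝ).roots_charpoly_eq_eigenvalues]

theorem le_lapRadius {t : ℝ} (ht : t ∈ lapEigs G) : t ≤ lapRadius G := by
  rw [lapRadius, ← card_lapEigs G, ← Multiset.length_sort (· ≤ ·)]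
  exact (Multiset.pairwise_sort _ _).le_getD_length_sub_one ((Multiset.mem_sort _).mpr ht) 0

theorem lapRadius_mem_lapEigs [Nonempty V] : lapRadius G ∈ lapEigs G := by
  have hlen : Fintype.card V - 1 < ((lapEigs G).sort (· ≤ ·)).length := by
    rw [Multiset.length_sort, card_lapEigs]
    exact Nat.sub_one_lt Fintype.card_ne_zero
  rw [lapRadius, List.getD_eq_getElem _ _ hlen, ← Multiset.mem_sort (· ≤ ·)]
  exact List.getElem_mem hlen

theorem lapMatrix_compl_mulVec {R : Type*} [Ring R] (x : V → R) :
    Gᶜ.lapMatrix R *ᵥ x = (Fintype.card V : R) • x - (fun _ ↦ ∑ i, x i) - G.lapMatrix R *ᵥ x := by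
  rw [eq_sub_iff_add_eq, ← add_mulVec, add_comm, lapMatrix_add_lapMatrix_compl, sub_mulVec,
    smul_mulVec, one_mulVec]
  ext i
  simp [mulVec, dotProduct]

variable {G}

theorem dotProduct_lapMatrix_compl_mulVec {x : V → ℝ} {μ : ℝ} (hx : G.lapMatrix ℝ *ᵥ x = μ • x) :
    x ⬝ᵥ (Gᶜ.lapMatrix ℝ *ᵥ x) = (Fintype.card V - μ) * (x ⬝ᵥ x) - (∑ i, x i) ^ 2 := by
  have hconst : x ⬝ᵥ (fun _ ↦ ∑ i, x i) = (∑ i, x i) ^ 2 := by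
    simp [dotProduct, ← Finset.sum_mul, sq]
  rw [lapMatrix_compl_mulVec, hx, dotProduct_sub, dotProduct_sub, hconst, dotProduct_smul,
    dotProduct_smul, smul_eq_mul, smul_eq_mul]
  ring

theorem eigenvalue_le_card {x : V → ℝ} {μ : ℝ} (hx0 : x ≠ 0) (hx : G.lapMatrix ℝ *ᵥ x = μ • x) :
    μ ≤ Fintype.card V := by
  have hquad := (Gᶜ.posSemidef_lapMatrix ℝ).dotProduct_mulVec_nonneg x
  rw [star_trivial, dotProduct_lapMatrix_compl_mulVec hx] at hquad
  have hnorm : 0 < x ⬝ᵥ x := by simpa using dotProduct_star_self_pos_iff.mpr hx0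
  nlinarith [sq_nonneg (∑ i, x i)]

theorem not_connected_compl_of_lapMatrix_mulVec_eq_card_smul {x : V → ℝ} (hx0 : x ≠ 0)
    (hx : G.lapMatrix ℝ *ᵥ x = (Fintype.card V : ℝ) • x) : ¬ Gᶜ.Connected := by
  have hquad := (Gᶜ.posSemidef_lapMatrix ℝ).dotProduct_mulVec_nonneg x
  rw [star_trivial, dotProduct_lapMatrix_compl_mulVec hx, sub_self, zero_mul, zero_sub,
    neg_nonneg] at hquad
  have hsum : ∑ i, x i = 0 := pow_eq_zero_iff two_ne_zero |>.mp (hquad.antisymm (sq_nonneg _))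
  have hker : Gᶜ.lapMatrix ℝ *ᵥ x = 0 := by
    rw [lapMatrix_compl_mulVec, hx, hsum, sub_sub_cancel_left, neg_eq_zero]
    rfl
  intro hconn
  obtain ⟨v⟩ := hconn.nonempty
  have hconst (w : V) : x w = x v :=
    (lapMatrix_mulVec_eq_zero_iff_forall_reachable _).mp hker w v (hconn.preconnected w v)
  have hv : (Fintype.card V : ℝ) * x v = 0 := by
    rw [← hsum, Finset.sum_congr rfl fun w _ ↦ hconst w, Finset.sum_const, Finset.card_univ,
      nsmul_eq_mul]
  have hv0 : x v = 0 :=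
    (mul_eq_zero.mp hv).resolve_left (Nat.cast_ne_zero.mpr (Fintype.card_pos_iff.mpr ⟨v⟩).ne')
  exact hx0 (funext fun w ↦ (hconst w).trans hv0)

theorem exists_lapMatrix_mulVec_eq_card_smul (h : ¬ Gᶜ.Preconnected) :
    ∃ x ≠ 0, G.lapMatrix ℝ *ᵥ x = (Fintype.card V : ℝ) • x := by
  obtain ⟨u, w, huw⟩ : ∃ u w, ¬ Gᶜ.Reachable u w := by simpa [Preconnected] using h
  set a : ℝ := ((#{z | Gᶜ.Reachable u z} : ℕ) : ℝ)
  set b : ℝ := ((#{z | ¬ Gᶜ.Reachable u z} : ℕ) : ℝ)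
  -- the indicator of the component of `u`, shifted to be orthogonal to the constants
  set x : V → ℝ := fun z ↦ if Gᶜ.Reachable u z then b else -a
  have hsum : ∑ i, x i = 0 := by
    simp only [x, Finset.sum_ite, Finset.sum_const, nsmul_eq_mul]
    ring
  have hker : Gᶜ.lapMatrix ℝ *ᵥ x = 0 := by
    refine (lapMatrix_mulVec_eq_zero_iff_forall_reachable _).mpr fun i j hij ↦ ?_
    simp only [x, (show Gᶜ.Reachable u i ↔ Gᶜ.Reachable u j from
      ⟨(·.trans hij), (·.trans hij.symm)⟩)]
  have hb : 0 < b := by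
    simp only [b, Nat.cast_pos, Finset.card_pos]
    exact ⟨w, by simpa using huw⟩
  refine ⟨x, fun hx ↦ ?_, ?_⟩
  · have hxu : x u = b := if_pos .rfl
    rw [hx] at hxu
    exact hb.ne hxu
  · have := lapMatrix_compl_mulVec G x
    rw [hker, hsum, eq_comm, sub_eq_zero] at this
    rw [← this]
    ext
    simp

theorem lapRadius_eq_card_iff_not_connected_compl :
    lapRadius G = Fintype.card V ↔ ¬ Gᶜ.Connected := by
  rcases isEmpty_or_nonempty V with hV | hV
  · have hG : ¬ Gᶜ.Connected := fun h ↦ h.nonempty.elim hV.false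
    have hL : lapEigs G = 0 := Multiset.card_eq_zero.mp (by simp [card_lapEigs])
    simp [hG, lapRadius, hL]
  constructor
  · intro h
    obtain ⟨x, hx0, hx⟩ := (mem_roots_charpoly_iff _ _).mp (h ▸ lapRadius_mem_lapEigs G)
    exact not_connected_compl_of_lapMatrix_mulVec_eq_card_smul hx0 hx
  · intro h
    obtain ⟨x, hx0, hx⟩ := (mem_roots_charpoly_iff _ _).mp (lapRadius_mem_lapEigs G)
    refine (eigenvalue_le_card hx0 hx).antisymm (le_lapRadius G ?_)
    exact (mem_roots_charpoly_iff _ _).mpr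
      (exists_lapMatrix_mulVec_eq_card_smul fun h' ↦ h ⟨h'⟩)

end SimpleGraph

theorem IsCoprime.eq_zero_of_mul_eq_zero {R : Type*} [CommRing R] {a b x : R} (h : IsCoprime a b)
    (ha : x * a = 0) (hb : x * b = 0) : x = 0 := by
  obtain ⟨u, v, huv⟩ := h
  linear_combination u * ha + v * hb - x * huv

theorem SimpleGraph.not_connected_of_forall_adj_mem {V : Type*} {G : SimpleGraph V} (S : Set V)
    (hS : ∀ u v, G.Adj u v → u ∈ S → v ∈ S) {a b : V} (ha : a ∈ S) (hb : b ∉ S) :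
    ¬ G.Connected := fun h ↦ by
  obtain ⟨d, -, hd, hd'⟩ := (h.preconnected a b).some.exists_boundary_dart S ha hb
  exact hd' (hS _ _ d.adj hd)

theorem Nat.Prime.not_pow_dvd_two_mul {p k : ℕ} (hp : p.Prime) (hk : 2 ≤ k) (h4 : p ^ k ≠ 4) :
    ¬ p ^ k ∣ 2 * p := by
  intro h
  have hp2 : p * p ∣ 2 * p := (sq p ▸ pow_dvd_pow p hk).trans h
  obtain rfl := (Nat.prime_dvd_prime_iff_eq hp Nat.prime_two).mp
    (Nat.dvd_of_mul_dvd_mul_right hp.pos hp2)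
  exact h4 (Nat.dvd_antisymm h (pow_dvd_pow 2 hk))

namespace ZMod

variable {n : ℕ}

theorem natCast_ne_zero_of_pos_of_lt {m : ℕ} (h0 : 0 < m) (hm : m < n) : (m : ZMod n) ≠ 0 := by
  rw [Ne, natCast_eq_zero_iff]
  exact fun h ↦ (Nat.le_of_dvd h0 h).not_gt hm

theorem mul_eq_zero_of_dvd_val_mul [NeZero n] {a b : ZMod n} (h : n ∣ a.val * b.val) :
    a * b = 0 := by
  rwa [← natCast_zmod_val a, ← natCast_zmod_val b, ← Nat.cast_mul, natCast_eq_zero_iff]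

end ZMod

namespace ZdVert

variable {n : ℕ}

def ofDvd {d : ℕ} (hd : d ∣ n) (h1 : 1 < d) (h2 : d < n) : ZdVert n :=
  ⟨d, ZMod.natCast_ne_zero_of_pos_of_lt (by omega) h2, (n / d : ℕ),
    ZMod.natCast_ne_zero_of_pos_of_lt (Nat.div_pos h2.le (by omega))
      (Nat.div_lt_self (by omega) h1),
    by rw [← Nat.cast_mul, Nat.mul_div_cancel' hd, ZMod.natCast_self]⟩

theorem coe_ofDvd {d : ℕ} (hd : d ∣ n) (h1 : 1 < d) (h2 : d < n) :
    ((ofDvd hd h1 h2 : ZdVert n) : ZMod n) = d :=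
  rfl

theorem val_ofDvd {d : ℕ} (hd : d ∣ n) (h1 : 1 < d) (h2 : d < n) :
    ((ofDvd hd h1 h2 : ZdVert n) : ZMod n).val = d :=
  ZMod.val_natCast_of_lt h2

def neg (v : ZdVert n) : ZdVert n :=
  ⟨-v, neg_ne_zero.mpr v.2.1, by
    obtain ⟨y, hy, hvy⟩ := v.2.2
    exact ⟨y, hy, by rw [neg_mul, hvy, neg_zero]⟩⟩

theorem exists_prime_dvd [NeZero n] (v : ZdVert n) :
    ∃ r, r.Prime ∧ r ∣ (v : ZMod n).val ∧ r ∣ n := by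
  obtain ⟨-, y, hy, hvy⟩ := v.2
  have hv : ¬ IsUnit (v : ZMod n) := fun hu ↦ hy (hu.mul_right_eq_zero.mp hvy)
  rw [← ZMod.natCast_zmod_val (v : ZMod n), ZMod.isUnit_iff_coprime] at hv
  exact Nat.Prime.not_coprime_iff_dvd.mp hv

end ZdVert

section ZeroDivisorGraph

variable {n : ℕ}

theorem compl_zdGraph_adj {a b : ZdVert n} :
    (zdGraph n)ᶜ.Adj a b ↔ a ≠ b ∧ (a : ZMod n) * b ≠ 0 := by
  simp only [SimpleGraph.compl_adj, zdGraph]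
  tauto

theorem reachable_compl_zdGraph_of_mul_ne_zero {a b : ZdVert n} (h : (a : ZMod n) * b ≠ 0) :
    (zdGraph n)ᶜ.Reachable a b := by
  obtain rfl | hab := eq_or_ne a b
  · rfl
  · exact (compl_zdGraph_adj.mpr ⟨hab, h⟩).reachable

variable [NeZero n]

theorem not_connected_compl_zdGraph_of_eq_mul {p q : ℕ} (hp : p.Prime) (hq : q.Prime)
    (hpq : p ≠ q) (hn : n = p * q) : ¬ (zdGraph n)ᶜ.Connected := by
  subst hn
  let P := ZdVert.ofDvd (dvd_mul_right p q) hp.one_lt (lt_mul_of_one_lt_right hp.pos hq.one_lt)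
  let Q := ZdVert.ofDvd (dvd_mul_left q p) hq.one_lt (lt_mul_of_one_lt_left hq.pos hp.one_lt)
  refine SimpleGraph.not_connected_of_forall_adj_mem {v | p ∣ (v : ZMod (p * q)).val} ?_
    (a := P) (b := Q) (by simp [P, ZdVert.val_ofDvd]) ?_
  · rintro u v huv (hu : p ∣ _)
    obtain ⟨r, hr, hrv, hrn⟩ := v.exists_prime_dvd
    rcases (Nat.Prime.dvd_mul hr).mp hrn with hrp | hrq
    · exact (Nat.prime_dvd_prime_iff_eq hr hp).mp hrp ▸ hrv
    · rw [(Nat.prime_dvd_prime_iff_eq hr hq).mp hrq] at hrv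
      exact absurd (ZMod.mul_eq_zero_of_dvd_val_mul (Nat.mul_dvd_mul hu hrv))
        (compl_zdGraph_adj.mp huv).2
  · simpa [Q, ZdVert.val_ofDvd, Nat.prime_dvd_prime_iff_eq hp hq] using hpq

theorem not_connected_compl_zdGraph_of_eq_pow {p k : ℕ} (hp : p.Prime) (hk : 2 ≤ k)
    (hn : n = p ^ k) (h4 : n ≠ 4) : ¬ (zdGraph n)ᶜ.Connected := by
  have hdvd (v : ZdVert n) : p ∣ (v : ZMod n).val := by
    obtain ⟨r, hr, hrv, hrn⟩ := v.exists_prime_dvd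
    rwa [(Nat.prime_dvd_prime_iff_eq hr hp).mp (hr.dvd_of_dvd_pow (hn ▸ hrn))] at hrv
  have hpow_lt {j : ℕ} (hj : j < k) : p ^ j < n := hn ▸ Nat.pow_lt_pow_right hp.one_lt hj
  let z := ZdVert.ofDvd (hn ▸ pow_dvd_pow p (k.sub_le 1))
    (Nat.one_lt_pow (by omega) hp.one_lt) (hpow_lt (by omega))
  have hz (v : ZdVert n) : ¬ (zdGraph n)ᶜ.Adj z v := fun h ↦ (compl_zdGraph_adj.mp h).2 <|
    ZMod.mul_eq_zero_of_dvd_val_mul <| by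
      rw [ZdVert.val_ofDvd]
      calc n = p ^ (k - 1) * p := by rw [hn, pow_sub_one_mul (by omega)]
        _ ∣ p ^ (k - 1) * (v : ZMod n).val := Nat.mul_dvd_mul_left _ (hdvd v)
  let P := ZdVert.ofDvd (hn ▸ dvd_pow_self p (by omega)) hp.one_lt (pow_one p ▸ hpow_lt (by omega))
  have hP : P ≠ P.neg := fun h ↦ hp.not_pow_dvd_two_mul hk (hn ▸ h4) <| hn ▸ by
    have h' : (p : ZMod n) = -p := congrArg Subtype.val h
    rw [← ZMod.natCast_eq_zero_iff, Nat.cast_mul, Nat.cast_two]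
    linear_combination h'
  obtain ⟨w, hw⟩ : ∃ w, w ≠ z := by
    by_cases hPz : P = z
    · exact ⟨P.neg, hPz ▸ hP.symm⟩
    · exact ⟨P, hPz⟩
  exact SimpleGraph.not_connected_of_forall_adj_mem {z} (fun u v huv hu ↦ absurd (hu ▸ huv) (hz v))
    rfl hw

theorem connected_compl_zdGraph_of_dvd {p q : ℕ} (hp : p.Prime) (hq : q.Prime) (hpq : p ≠ q)
    (hdvd : p * q ∣ n) (hne : p * q ≠ n) : (zdGraph n)ᶜ.Connected := by
  have hlt : p * q < n := (Nat.le_of_dvd (NeZero.pos n) hdvd).lt_of_ne hne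
  let P := ZdVert.ofDvd (dvd_of_mul_right_dvd hdvd) hp.one_lt
    ((lt_mul_of_one_lt_right hp.pos hq.one_lt).trans hlt)
  let Q := ZdVert.ofDvd (dvd_of_mul_left_dvd hdvd) hq.one_lt
    ((lt_mul_of_one_lt_left hq.pos hp.one_lt).trans hlt)
  have hQP : (Q : ZMod n) * P ≠ 0 := by
    rw [ZdVert.coe_ofDvd, ZdVert.coe_ofDvd, ← Nat.cast_mul]
    exact ZMod.natCast_ne_zero_of_pos_of_lt (Nat.mul_pos hq.pos hp.pos) (mul_comm q p ▸ hlt)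
  have hcop : IsCoprime (p : ZMod n) q := ((Nat.coprime_primes hp hq).mpr hpq).cast
  refine (SimpleGraph.connected_iff_exists_forall_reachable _).mpr ⟨P, fun x ↦ .symm ?_⟩
  by_cases hxp : (x : ZMod n) * p = 0
  · have hxq : (x : ZMod n) * q ≠ 0 := fun hxq ↦ x.2.1 (hcop.eq_zero_of_mul_eq_zero hxp hxq)
    exact (reachable_compl_zdGraph_of_mul_ne_zero hxq).trans
      (reachable_compl_zdGraph_of_mul_ne_zero hQP)
  · exact reachable_compl_zdGraph_of_mul_ne_zero hxp

theorem connected_compl_zdGraph_four : (zdGraph 4)ᶜ.Connected := by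
  have hall (v : ZdVert 4) : (v : ZMod 4) = 2 := by
    obtain ⟨x, hx0, y, hy0, hxy⟩ := v
    revert x y
    decide
  let two : ZdVert 4 := ⟨2, by decide⟩
  refine (SimpleGraph.connected_iff_exists_forall_reachable _).mpr ⟨two, fun w ↦ ?_⟩
  rw [show w = two from Subtype.ext (hall w)]

theorem not_connected_compl_zdGraph_iff (hn : 2 ≤ n) (hcomp : ¬ n.Prime) :
    ¬ (zdGraph n)ᶜ.Connected ↔
      ((∃ p q : ℕ, p.Prime ∧ q.Prime ∧ p ≠ q ∧ n = p * q) ∨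
       ((∃ p k : ℕ, p.Prime ∧ 0 < k ∧ n = p ^ k) ∧ n ≠ 4)) := by
  constructor
  · intro hdisc
    by_cases hpow : IsPrimePow n
    · obtain ⟨p, k, hp, hk, rfl⟩ := (isPrimePow_nat_iff n).mp hpow
      exact .inr ⟨⟨p, k, hp, hk, rfl⟩, fun h4 ↦ hdisc (h4 ▸ connected_compl_zdGraph_four)⟩
    · obtain ⟨p, hpn, q, hqn, hpq⟩ := (Nat.not_isPrimePow_iff_nontrivial_of_two_le hn).mp hpow
      rw [Finset.mem_coe, Nat.mem_primeFactors] at hpn hqn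
      refine .inl ⟨p, q, hpn.1, hqn.1, hpq, by_contra fun hne ↦ hdisc ?_⟩
      exact connected_compl_zdGraph_of_dvd hpn.1 hqn.1 hpq
        (((Nat.coprime_primes hpn.1 hqn.1).mpr hpq).mul_dvd_of_dvd_of_dvd hpn.2.1 hqn.2.1)
        (Ne.symm hne)
  · rintro (⟨p, q, hp, hq, hpq, hn⟩ | ⟨⟨p, k, hp, hk, hn⟩, h4⟩)
    · exact not_connected_compl_zdGraph_of_eq_mul hp hq hpq hn
    · have hk1 : k ≠ 1 := by
        rintro rfl
        exact hcomp (by rwa [hn, pow_one])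
      exact not_connected_compl_zdGraph_of_eq_pow hp (by omega) hn h4

end ZeroDivisorGraph

/-- For composite `n ≥ 4`, the Laplacian spectral radius of `Γ(ZMod n)` equals its
number of vertices iff `n` is a product of two distinct primes or a prime power with
`n ≠ 4`. -/
theorem lapRadius_eq_card_iff (n : ℕ) [NeZero n] (hn : 4 ≤ n) (hcomp : ¬ n.Prime) :
    lapRadius (zdGraph n) = (Fintype.card (ZdVert n) : ℝ) ↔
      ((∃ p q : ℕ, p.Prime ∧ q.Prime ∧ p ≠ q ∧ n = p * q) ∨
       ((∃ p k : ℕ, p.Prime ∧ 0 < k ∧ n = p ^ k) ∧ n ≠ 4)) := by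
  rw [SimpleGraph.lapRadius_eq_card_iff_not_connected_compl]
  exact not_connected_compl_zdGraph_iff (by omega) hcomp
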